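/- arXiv:2306.10131 — 3 statements merged into one kernel-verified Lean document; each statement's English description precedes it below -/
import Mathlib

section
/- Let u be a nonnegative continuous function on a domain Ω ⊆ ℝⁿ that is C² and harmonic on the open set {u > 0}. Then u is subharmonic on Ω (i.e., for every nonnegative test function η ∈ C_c^∞(Ω), ∫ u Δη ≥ 0). -/
open MeasureTheory Metric Set Filter
open scoped RealInnerProductSpace ENNReal Topology NNReal

noncomputable section

abbrev En (n : ℕ) := EuclideanSpace ℝ (Fin n)

def lap {n : ℕ} (f : En n → ℝ) (x : En n) : ℝ :=
  ∑ i : Fin n, fderiv ℝ (fun y => fderiv ℝ f y (EuclideanSpace.single i 1)) x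
    (EuclideanSpace.single i 1)

def divg {n : ℕ} (ξ : En n → En n) (x : En n) : ℝ :=
  ∑ i : Fin n, fderiv ℝ ξ x (EuclideanSpace.single i 1) i

structure IsVarSol {n : ℕ} (Ω : Set (En n)) (u : En n → ℝ) (χ : En n → ℝ) : Prop where
  cont : ContinuousOn u Ω
  nonneg : ∀ x ∈ Ω, 0 ≤ u x
  lip : ∃ C : ℝ≥0, LipschitzOnWith C u Ω
  smooth_pos : ContDiffOn ℝ 2 u ({x | 0 < u x} ∩ Ω)
  harmonic_pos : ∀ x ∈ Ω, 0 < u x → lap u x = 0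
  chi_meas : Measurable χ
  chi_01 : ∀ x, χ x = 0 ∨ χ x = 1
  chi_ge : ∀ᵐ (x : En n) ∂volume, x ∈ Ω → 0 < u x → χ x = 1
  inner_var : ∀ ξ : En n → En n, (∃ K : ℝ≥0, LipschitzWith K ξ) →
    HasCompactSupport ξ → tsupport ξ ⊆ Ω →
    ∫ x in Ω, ((‖gradient u x‖ ^ 2 + χ x) * divg ξ x
      - 2 * ⟪gradient u x, fderiv ℝ ξ x (gradient u x)⟫) = 0

def Dq {n : ℕ} (u χ : En n → ℝ) (x : En n) (r : ℝ) : ℝ :=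
  (1 / r ^ n) * ∫ y in ball x r, (‖gradient u y‖ ^ 2 + χ y)

def Hq {n : ℕ} (u : En n → ℝ) (x : En n) (r : ℝ) : ℝ :=
  (1 / r ^ (n + 1)) * ∫ y in sphere x r, (u y) ^ 2 ∂μH[(n : ℝ) - 1]

def Mq {n : ℕ} (u χ : En n → ℝ) (x : En n) (r : ℝ) : ℝ := Dq u χ x r - Hq u x r

def ballVol (n : ℕ) : ℝ := (volume (ball (0 : En n) 1)).toReal

def Nq {n : ℕ} (u χ : En n → ℝ) (x : En n) (r : ℝ) : ℝ :=
  (Dq u χ x r - ballVol n) / Hq u x r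

def Vq {n : ℕ} (u χ : En n → ℝ) (x : En n) (r : ℝ) : ℝ :=
  (∫ y in ball x r, (1 - χ y)) / Hq u x r

/-! ### Auxiliary material for `stmt_0` -/

namespace Stmt0Aux

/-- A smooth bump on `ℝ` supported in `(1, 2)`, equal to `1` on `[5/4, 7/4]`. -/
def ρb : ContDiffBump (3/2 : ℝ) :=
  { rIn := 1/4, rOut := 1/2, rIn_pos := by norm_num, rIn_lt_rOut := by norm_num }

def ρ : ℝ → ℝ := fun t => ρb t

lemma ρ_nonneg (t : ℝ) : 0 ≤ ρ t := ρb.nonneg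

lemma ρ_contDiff : ContDiff ℝ (↑(⊤ : ℕ∞)) ρ := ρb.contDiff

lemma ρ_continuous : Continuous ρ := ρb.continuous

lemma ρb_rIn : ρb.rIn = 1/4 := rfl
lemma ρb_rOut : ρb.rOut = 1/2 := rfl

lemma ρ_zero {t : ℝ} (h : t ≤ 1 ∨ 2 ≤ t) : ρ t = 0 := by
  have : t ∉ Function.support (ρb : ℝ → ℝ) := by
    rw [ρb.support_eq, ρb_rOut]
    simp only [mem_ball, Real.dist_eq, not_lt]
    rcases h with h | h
    · rw [abs_sub_comm, abs_of_nonneg (by linarith)]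
      norm_num
      linarith
    · rw [abs_of_nonneg (by linarith)]
      norm_num
      linarith
  simpa [ρ] using Function.notMem_support.mp this

lemma ρ_one {t : ℝ} (h1 : 5/4 ≤ t) (h2 : t ≤ 7/4) : ρ t = 1 := by
  apply ρb.one_of_mem_closedBall
  simp only [mem_closedBall, Real.dist_eq, ρb_rIn]
  rw [abs_le]
  constructor <;> linarith

/-- Normalization constant. -/
def cρ : ℝ := ∫ s in (0:ℝ)..2, ρ s

lemma ρ_intInt (a b : ℝ) : IntervalIntegrable ρ volume a b :=
  ρ_continuous.intervalIntegrable a b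

lemma cρ_pos : 0 < cρ := by
  have h1 : ∫ s in (5/4:ℝ)..(7/4), ρ s = 1/2 := by
    rw [intervalIntegral.integral_congr (g := fun _ => (1:ℝ))
      (fun x hx => by
        rw [uIcc_of_le (by norm_num)] at hx
        exact ρ_one hx.1 hx.2)]
    simp
    norm_num
  have h2 : (∫ s in (5/4:ℝ)..(7/4), ρ s) ≤ cρ := by
    apply intervalIntegral.integral_mono_interval (by norm_num) (by norm_num) (by norm_num)
    · filter_upwards with x using ρ_nonneg x
    · exact ρ_intInt 0 2
  rw [h1] at h2
  linarith

/-- Smooth nondecreasing transition: `0` for `t ≤ 1`, `1` for `t ≥ 2`. -/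
def ψ : ℝ → ℝ := fun t => (∫ s in (0:ℝ)..t, ρ s) / cρ

lemma hasDerivAt_ψ (t : ℝ) : HasDerivAt ψ (ρ t / cρ) t := by
  have h : HasDerivAt (fun b => ∫ s in (0:ℝ)..b, ρ s) (ρ t) t :=
    intervalIntegral.integral_hasDerivAt_right (ρ_intInt 0 t)
      (ρ_continuous.stronglyMeasurableAtFilter _ _) ρ_continuous.continuousAt
  exact h.div_const cρ

lemma ψ_zero {t : ℝ} (h : t ≤ 1) : ψ t = 0 := by
  have : ∫ s in (0:ℝ)..t, ρ s = ∫ s in (0:ℝ)..t, (0:ℝ) := by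
    apply intervalIntegral.integral_congr
    intro x hx
    apply ρ_zero
    left
    rcases le_total 0 t with h0 | h0
    · rw [uIcc_of_le h0] at hx; exact le_trans hx.2 h
    · rw [uIcc_of_ge h0] at hx; exact le_trans hx.2 (le_trans (le_of_eq rfl) (by linarith))
  simp [ψ, this]

lemma ψ_one {t : ℝ} (h : 2 ≤ t) : ψ t = 1 := by
  have h2 : ∫ s in (2:ℝ)..t, ρ s = 0 := by
    rw [intervalIntegral.integral_congr (g := fun _ => (0:ℝ))
      (fun x hx => by
        rw [uIcc_of_le h] at hx
        exact ρ_zero (Or.inr hx.1))]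
    simp
  have h3 : ∫ s in (0:ℝ)..t, ρ s = cρ := by
    rw [← intervalIntegral.integral_add_adjacent_intervals (ρ_intInt 0 2) (ρ_intInt 2 t), h2]
    simp [cρ]
  rw [ψ, h3, div_self cρ_pos.ne']

lemma ψ_nonneg (t : ℝ) : 0 ≤ ψ t := by
  rcases le_total t 0 with h | h
  · rw [ψ_zero (by linarith)]
  · exact div_nonneg (intervalIntegral.integral_nonneg h (fun u _ => ρ_nonneg u)) cρ_pos.le

lemma ψ_le_one (t : ℝ) : ψ t ≤ 1 := by
  rcases le_total t 2 with h | h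
  · rcases le_total t 0 with h0 | h0
    · rw [ψ_zero (by linarith)]; norm_num
    · have : (∫ s in (0:ℝ)..t, ρ s) ≤ cρ := by
        apply intervalIntegral.integral_mono_interval le_rfl h0 h
        · filter_upwards with x using ρ_nonneg x
        · exact ρ_intInt 0 2
      rw [ψ, div_le_one cρ_pos]
      exact this
  · rw [ψ_one h]

lemma ψ_continuous : Continuous ψ := by
  have : Differentiable ℝ ψ := fun t => (hasDerivAt_ψ t).differentiableAt
  exact this.continuous

lemma deriv_ψ : deriv ψ = fun t => ρ t / cρ := funext fun t => (hasDerivAt_ψ t).deriv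

lemma ψ_contDiff : ContDiff ℝ (↑(⊤ : ℕ∞)) ψ := by
  rw [contDiff_infty_iff_deriv]
  refine ⟨fun t => (hasDerivAt_ψ t).differentiableAt, ?_⟩
  rw [deriv_ψ]
  exact ρ_contDiff.div_const cρ

/-- The convex function: `φ t = ∫_0^t ψ`. -/
def φ : ℝ → ℝ := fun t => ∫ s in (0:ℝ)..t, ψ s

lemma ψ_intInt (a b : ℝ) : IntervalIntegrable ψ volume a b :=
  ψ_continuous.intervalIntegrable a b

lemma hasDerivAt_φ (t : ℝ) : HasDerivAt φ (ψ t) t :=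
  intervalIntegral.integral_hasDerivAt_right (ψ_intInt 0 t)
    (ψ_continuous.stronglyMeasurableAtFilter _ _) ψ_continuous.continuousAt

lemma deriv_φ : deriv φ = ψ := funext fun t => (hasDerivAt_φ t).deriv

lemma φ_contDiff : ContDiff ℝ (↑(⊤ : ℕ∞)) φ := by
  rw [contDiff_infty_iff_deriv]
  refine ⟨fun t => (hasDerivAt_φ t).differentiableAt, ?_⟩
  rw [deriv_φ]
  exact ψ_contDiff

lemma φ_zero {t : ℝ} (h : t ≤ 1) : φ t = 0 := by
  have : ∫ s in (0:ℝ)..t, ψ s = ∫ s in (0:ℝ)..t, (0:ℝ) := by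
    apply intervalIntegral.integral_congr
    intro x hx
    apply ψ_zero
    rcases le_total 0 t with h0 | h0
    · rw [uIcc_of_le h0] at hx; exact le_trans hx.2 h
    · rw [uIcc_of_ge h0] at hx; exact le_trans hx.2 (by linarith)
  simp [φ, this]

lemma φ_nonneg {t : ℝ} (h : 0 ≤ t) : 0 ≤ φ t :=
  intervalIntegral.integral_nonneg h (fun u _ => ψ_nonneg u)

lemma φ_le {t : ℝ} (h : 0 ≤ t) : φ t ≤ t := by
  have : φ t ≤ ∫ s in (0:ℝ)..t, (1:ℝ) :=
    intervalIntegral.integral_mono_on h (ψ_intInt 0 t)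
      (intervalIntegrable_const) (fun x _ => ψ_le_one x)
  simpa using this

lemma φ_ge {t : ℝ} (h : 0 ≤ t) : t - 2 ≤ φ t := by
  rcases le_total t 2 with h2 | h2
  · have := φ_nonneg h
    linarith
  · have hsplit : φ t = φ 2 + ∫ s in (2:ℝ)..t, ψ s := by
      rw [φ, φ, ← intervalIntegral.integral_add_adjacent_intervals (ψ_intInt 0 2) (ψ_intInt 2 t)]
    have h1 : ∫ s in (2:ℝ)..t, ψ s = t - 2 := by
      rw [intervalIntegral.integral_congr (g := fun _ => (1:ℝ))
        (fun x hx => by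
          rw [uIcc_of_le h2] at hx
          exact ψ_one hx.1)]
      simp
    have h0 : 0 ≤ φ 2 := φ_nonneg (by norm_num)
    rw [hsplit, h1]
    linarith

end Stmt0Aux


section LapLemmas

variable {n : ℕ}

lemma lap_congr {f g : En n → ℝ} {x : En n} (h : f =ᶠ[𝓝 x] g) : lap f x = lap g x := by
  have h1 : fderiv ℝ f =ᶠ[𝓝 x] fderiv ℝ g := h.fderiv
  unfold lap
  refine Finset.sum_congr rfl fun i _ => ?_
  have h2 : (fun y => fderiv ℝ f y (EuclideanSpace.single i 1)) =ᶠ[𝓝 x]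
      (fun y => fderiv ℝ g y (EuclideanSpace.single i 1)) :=
    h1.mono fun y hy => by simp only [hy]
  rw [h2.fderiv_eq]

lemma lap_const_zero (x : En n) : lap (fun _ => (0:ℝ)) x = 0 := by
  simp [lap]

lemma lap_eventually_zero {f : En n → ℝ} {x : En n} (h : f =ᶠ[𝓝 x] fun _ => 0) :
    lap f x = 0 := (lap_congr h).trans (lap_const_zero x)

lemma lap_zero_of_not_mem_tsupport {f : En n → ℝ} {x : En n} (hx : x ∉ tsupport f) :
    lap f x = 0 := by
  apply lap_eventually_zero
  filter_upwards [(isClosed_tsupport f).isOpen_compl.mem_nhds hx] with y hy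
  exact image_eq_zero_of_notMem_tsupport hy

lemma continuous_lap {f : En n → ℝ} (hf : ContDiff ℝ 2 f) : Continuous (lap f) := by
  unfold lap
  apply continuous_finset_sum
  intro i _
  have h1 : ContDiff ℝ 1 (fun y => fderiv ℝ f y (EuclideanSpace.single i 1)) :=
    (hf.fderiv_right (m := 1) (by norm_num)).clm_apply contDiff_const
  have h2 : ContDiff ℝ 0 (fderiv ℝ (fun y => fderiv ℝ f y (EuclideanSpace.single i 1))) :=
    h1.fderiv_right (m := 0) (by norm_num)
  exact (h2.clm_apply contDiff_const).continuous

lemma lap_comp_nonneg {u : En n → ℝ} {S : Set (En n)} (hS : IsOpen S) {x : En n} (hxS : x ∈ S)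
    (hu : ContDiffOn ℝ 2 u S) {φ ψ ψ' : ℝ → ℝ}
    (hφd : ∀ t, HasDerivAt φ (ψ t) t) (hψd : ∀ t, HasDerivAt ψ (ψ' t) t)
    (hψ'nn : ∀ t, 0 ≤ ψ' t) (hlap : lap u x = 0) :
    0 ≤ lap (fun y => φ (u y)) x := by
  have hu2 : ContDiffAt ℝ 2 u x := hu.contDiffAt (hS.mem_nhds hxS)
  have hudiff : ∀ᶠ y in 𝓝 x, DifferentiableAt ℝ u y := by
    filter_upwards [hS.mem_nhds hxS] with y hy
    exact (hu.contDiffAt (hS.mem_nhds hy)).differentiableAt (by norm_num)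
  have h1 : (fun y => fderiv ℝ (fun z => φ (u z)) y) =ᶠ[𝓝 x]
      (fun y => ψ (u y) • fderiv ℝ u y) := by
    filter_upwards [hudiff] with y hy
    exact ((hφd (u y)).comp_hasFDerivAt y hy.hasFDerivAt).fderiv
  have key : ∀ i : Fin n,
      fderiv ℝ (fun y => fderiv ℝ (fun z => φ (u z)) y (EuclideanSpace.single i 1)) x
          (EuclideanSpace.single i 1)
        = ψ (u x) * (fderiv ℝ (fun y => fderiv ℝ u y (EuclideanSpace.single i 1)) x
          (EuclideanSpace.single i 1))
          + ψ' (u x) * (fderiv ℝ u x (EuclideanSpace.single i 1))^2 := by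
    intro i
    have h2 : (fun y => fderiv ℝ (fun z => φ (u z)) y (EuclideanSpace.single i 1)) =ᶠ[𝓝 x]
        (fun y => ψ (u y) * fderiv ℝ u y (EuclideanSpace.single i 1)) := by
      filter_upwards [h1] with y hy
      rw [hy]
      simp
    rw [h2.fderiv_eq]
    have hdiA : DifferentiableAt ℝ u x := hu2.differentiableAt (by norm_num)
    have hc : HasFDerivAt (fun y => ψ (u y)) (ψ' (u x) • fderiv ℝ u x) x :=
      (hψd (u x)).comp_hasFDerivAt x hdiA.hasFDerivAt
    have hfd1 : ContDiffAt ℝ 1 (fun y => fderiv ℝ u y (EuclideanSpace.single i 1)) x :=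
      (hu2.fderiv_right (m := 1) (by norm_num)).clm_apply contDiffAt_const
    have hd : HasFDerivAt (fun y => fderiv ℝ u y (EuclideanSpace.single i 1))
        (fderiv ℝ (fun y => fderiv ℝ u y (EuclideanSpace.single i 1)) x) x :=
      (hfd1.differentiableAt (by norm_num)).hasFDerivAt
    rw [(hc.fun_mul hd).fderiv]
    simp only [ContinuousLinearMap.add_apply, ContinuousLinearMap.smul_apply, smul_eq_mul]
    ring
  have hsum : lap (fun y => φ (u y)) x
      = ψ (u x) * lap u x
        + ψ' (u x) * ∑ i : Fin n, (fderiv ℝ u x (EuclideanSpace.single i 1))^2 := by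
    rw [lap, Finset.sum_congr rfl fun i _ => key i, Finset.sum_add_distrib, ← Finset.mul_sum,
      ← Finset.mul_sum, lap]
  rw [hsum, hlap, mul_zero, zero_add]
  exact mul_nonneg (hψ'nn _) (Finset.sum_nonneg fun i _ => sq_nonneg _)

lemma integral_mul_lap_eq {V η : En n → ℝ} (hV : ContDiff ℝ 2 V) (hVc : HasCompactSupport V)
    (hη : ContDiff ℝ (↑(⊤:ℕ∞)) η) (_hηc : HasCompactSupport η) :
    ∫ x, V x * lap η x = ∫ x, lap V x * η x := by
  have h1top : (1 : WithTop ℕ∞) + 1 ≤ (↑(⊤:ℕ∞)) := by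
    exact WithTop.coe_le_coe.mpr le_top
  have htop1 : (↑(⊤:ℕ∞) : WithTop ℕ∞) + 1 ≤ (↑(⊤:ℕ∞)) := by
    exact WithTop.coe_le_coe.mpr le_top
  -- continuity and compact support helpers
  have hVcont : Continuous V := hV.continuous
  have hdV : ∀ i : Fin n, ContDiff ℝ 1 (fun x => fderiv ℝ V x (EuclideanSpace.single i 1)) :=
    fun i => (hV.fderiv_right (m := 1) (by norm_num)).clm_apply contDiff_const
  have hdη : ∀ i : Fin n,
      ContDiff ℝ (↑(⊤:ℕ∞)) (fun x => fderiv ℝ η x (EuclideanSpace.single i 1)) :=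
    fun i => (hη.fderiv_right (m := (↑(⊤:ℕ∞))) htop1).clm_apply contDiff_const
  have hcsdV : ∀ i : Fin n,
      HasCompactSupport (fun x => fderiv ℝ V x (EuclideanSpace.single i 1)) := fun i =>
    (hVc.fderiv ℝ).comp_left (g := fun L : En n →L[ℝ] ℝ => L (EuclideanSpace.single i 1)) rfl
  have hcsddV : ∀ i : Fin n, HasCompactSupport
      (fun x => fderiv ℝ (fun y => fderiv ℝ V y (EuclideanSpace.single i 1)) x
        (EuclideanSpace.single i 1)) := fun i =>
    ((hcsdV i).fderiv ℝ).comp_left (g := fun L : En n →L[ℝ] ℝ => L (EuclideanSpace.single i 1)) rfl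
  have hcontddV : ∀ i : Fin n, Continuous
      (fun x => fderiv ℝ (fun y => fderiv ℝ V y (EuclideanSpace.single i 1)) x
        (EuclideanSpace.single i 1)) := fun i =>
    (((hdV i).fderiv_right (m := 0) (by norm_num)).clm_apply contDiff_const).continuous
  -- step for a fixed coordinate
  have step : ∀ i : Fin n,
      ∫ x, V x * fderiv ℝ (fun y => fderiv ℝ η y (EuclideanSpace.single i 1)) x
          (EuclideanSpace.single i 1)
        = ∫ x, fderiv ℝ (fun y => fderiv ℝ V y (EuclideanSpace.single i 1)) x
          (EuclideanSpace.single i 1) * η x := by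
    intro i
    set gi := fun y => fderiv ℝ η y (EuclideanSpace.single i 1) with hgi_def
    set Vi := fun y => fderiv ℝ V y (EuclideanSpace.single i 1) with hVi_def
    have hgicont : Continuous gi := (hdη i).continuous
    have hdgicont : Continuous (fun x => fderiv ℝ gi x (EuclideanSpace.single i 1)) :=
      (((hdη i).fderiv_right (m := 1) h1top).clm_apply contDiff_const).continuous
    have hVicont : Continuous Vi := (hdV i).continuous
    have e1 : ∫ x, V x * fderiv ℝ gi x (EuclideanSpace.single i 1)
        = - ∫ x, fderiv ℝ V x (EuclideanSpace.single i 1) * gi x := by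
      apply integral_mul_fderiv_eq_neg_fderiv_mul_of_integrable
      · exact ((hVicont.mul hgicont).integrable_of_hasCompactSupport
          ((hcsdV i).mul_right))
      · exact ((hVcont.mul hdgicont).integrable_of_hasCompactSupport (hVc.mul_right))
      · exact ((hVcont.mul hgicont).integrable_of_hasCompactSupport (hVc.mul_right))
      · exact fun x _ => hV.differentiable (by norm_num) x
      · exact fun x _ => (hdη i).differentiable (by simp) x
    have e2 : ∫ x, Vi x * fderiv ℝ η x (EuclideanSpace.single i 1)
        = - ∫ x, fderiv ℝ Vi x (EuclideanSpace.single i 1) * η x := by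
      apply integral_mul_fderiv_eq_neg_fderiv_mul_of_integrable
      · exact ((hcontddV i).mul (hη.continuous) |>.integrable_of_hasCompactSupport
          ((hcsddV i).mul_right))
      · exact ((hVicont.mul hgicont).integrable_of_hasCompactSupport ((hcsdV i).mul_right))
      · exact ((hVicont.mul hη.continuous).integrable_of_hasCompactSupport
          ((hcsdV i).mul_right))
      · exact fun x _ => (hdV i).differentiable (by norm_num) x
      · exact fun x _ => hη.differentiable (by simp) x
    rw [e1, e2]
    simp
  -- sum over coordinates
  have int1 : ∀ i : Fin n, Integrable (fun x => V x *
      fderiv ℝ (fun y => fderiv ℝ η y (EuclideanSpace.single i 1)) x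
        (EuclideanSpace.single i 1)) := by
    intro i
    have hdgicont : Continuous (fun x => fderiv ℝ
        (fun y => fderiv ℝ η y (EuclideanSpace.single i 1)) x (EuclideanSpace.single i 1)) :=
      (((hdη i).fderiv_right (m := 1) h1top).clm_apply contDiff_const).continuous
    exact (hVcont.mul hdgicont).integrable_of_hasCompactSupport (hVc.mul_right)
  have int2 : ∀ i : Fin n, Integrable (fun x =>
      fderiv ℝ (fun y => fderiv ℝ V y (EuclideanSpace.single i 1)) x
        (EuclideanSpace.single i 1) * η x) := fun i =>
    ((hcontddV i).mul hη.continuous).integrable_of_hasCompactSupport ((hcsddV i).mul_right)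
  calc ∫ x, V x * lap η x
      = ∫ x, ∑ i : Fin n, V x * fderiv ℝ (fun y => fderiv ℝ η y (EuclideanSpace.single i 1)) x
          (EuclideanSpace.single i 1) := by
        congr 1; funext x; rw [lap, Finset.mul_sum]
    _ = ∑ i : Fin n, ∫ x, V x * fderiv ℝ (fun y => fderiv ℝ η y (EuclideanSpace.single i 1)) x
          (EuclideanSpace.single i 1) := integral_finset_sum _ (fun i _ => int1 i)
    _ = ∑ i : Fin n, ∫ x, fderiv ℝ (fun y => fderiv ℝ V y (EuclideanSpace.single i 1)) x
          (EuclideanSpace.single i 1) * η x := Finset.sum_congr rfl fun i _ => step i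
    _ = ∫ x, ∑ i : Fin n, fderiv ℝ (fun y => fderiv ℝ V y (EuclideanSpace.single i 1)) x
          (EuclideanSpace.single i 1) * η x := (integral_finset_sum _ (fun i _ => int2 i)).symm
    _ = ∫ x, lap V x * η x := by
        congr 1; funext x; rw [lap, Finset.sum_mul]

end LapLemmas

theorem stmt_0 {n : ℕ} (Ω : Set (En n)) (hΩ : IsOpen Ω) (u : En n → ℝ)
    (hu_cont : ContinuousOn u Ω) (hu_nonneg : ∀ x ∈ Ω, 0 ≤ u x)
    (hu_c2 : ContDiffOn ℝ 2 u ({x | 0 < u x} ∩ Ω))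
    (hu_harm : ∀ x ∈ Ω, 0 < u x → lap u x = 0)
    (η : En n → ℝ) (hη : ContDiff ℝ (⊤ : ℕ∞) η) (hηc : HasCompactSupport η)
    (hηs : tsupport η ⊆ Ω) (hηnn : ∀ x, 0 ≤ η x) :
    0 ≤ ∫ x in Ω, u x * lap η x := by
  classical
  have h2top : (2 : WithTop ℕ∞) ≤ (↑(⊤:ℕ∞)) := WithTop.coe_le_coe.mpr le_top
  set K := tsupport η with hKdef
  have hKc : IsCompact K := hηc
  have hKΩ : K ⊆ Ω := hηs
  have hlapη0 : ∀ x ∉ K, lap η x = 0 := fun x hx => lap_zero_of_not_mem_tsupport hx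
  have hη2 : ContDiff ℝ 2 η := hη.of_le h2top
  have hetaTop : ContDiff ℝ (↑(⊤:ℕ∞)) η := hη.of_le (by simp)
  have hlapη_cont : Continuous (lap η) := continuous_lap hη2
  set G := fun x => u x * lap η x with hGdef
  have hG0 : ∀ x ∉ K, G x = 0 := fun x hx => by simp [hGdef, hlapη0 x hx]
  have hGcont : Continuous G := by
    rw [continuous_iff_continuousAt]
    intro x
    by_cases hx : x ∈ Ω
    · exact (hu_cont.continuousAt (hΩ.mem_nhds hx)).mul hlapη_cont.continuousAt
    · have hxK : x ∉ K := fun h => hx (hKΩ h)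
      apply ContinuousAt.congr (continuousAt_const (y := (0:ℝ)))
      filter_upwards [(hKc.isClosed.isOpen_compl).mem_nhds hxK] with y hy
      exact (hG0 y hy).symm
  have hGcs : HasCompactSupport G := HasCompactSupport.intro hKc hG0
  have hGint : Integrable G := hGcont.integrable_of_hasCompactSupport hGcs
  have hsetG : ∫ x in Ω, G x = ∫ x, G x :=
    setIntegral_eq_integral_of_forall_compl_eq_zero
      (fun x hx => hG0 x (fun hK => hx (hKΩ hK)))
  show 0 ≤ ∫ x in Ω, G x
  rw [hsetG]
  set M : ℝ := ∫ x, |lap η x| with hMdef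
  have hlapabs_int : Integrable (fun x => |lap η x|) := by
    apply hlapη_cont.abs.integrable_of_hasCompactSupport
    exact HasCompactSupport.intro hKc (fun x hx => by simp [hlapη0 x hx])
  have hMnn : 0 ≤ M := integral_nonneg (fun x => abs_nonneg _)
  -- the open set where `u` is positive (and C²)
  set S : Set (En n) := Ω ∩ u ⁻¹' (Ioi 0) with hSdef
  have hSopen : IsOpen S := hu_cont.isOpen_inter_preimage hΩ isOpen_Ioi
  have hu_c2' : ContDiffOn ℝ 2 u S := by
    apply hu_c2.mono
    intro y hy
    exact ⟨hy.2, hy.1⟩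
  -- the cutoff ζ
  obtain ⟨δ, hδpos, hδ⟩ := hKc.exists_cthickening_subset_open hΩ hKΩ
  obtain ⟨ζf, hζ0, hζ1, hζ01⟩ := exists_contMDiffMap_zero_one_nhds_of_isClosed
    (modelWithCornersSelf ℝ (En n)) (n := (⊤ : ℕ∞)) (s := (thickening δ K)ᶜ) (t := K)
    isOpen_thickening.isClosed_compl hKc.isClosed
    (Set.disjoint_left.mpr fun x hxs hxK => hxs (self_subset_thickening hδpos K hxK))
  set ζ : En n → ℝ := (ζf : En n → ℝ) with hζdef
  have hζsmooth : ContDiff ℝ (↑(⊤:ℕ∞)) ζ := contMDiff_iff_contDiff.mp ζf.contMDiff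
  have hζs0 : ∀ x ∈ (thickening δ K)ᶜ, ζ x = 0 := hζ0.self_of_nhdsSet
  have hζtsupp : tsupport ζ ⊆ cthickening δ K := by
    apply closure_minimal _ isClosed_cthickening
    intro x hx
    by_contra hxc
    have hxthick : x ∉ thickening δ K :=
      fun h => hxc (thickening_subset_cthickening δ K h)
    exact hx (hζs0 x hxthick)
  have hζcs : HasCompactSupport ζ :=
    hKc.cthickening.of_isClosed_subset (isClosed_tsupport ζ) hζtsupp
  have hζΩ : tsupport ζ ⊆ Ω := hζtsupp.trans hδ
  obtain ⟨N, hNopen, hKN, hζN⟩ := eventually_nhdsSet_iff_exists.mp hζ1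
  -- main estimate, for each ε > 0
  have main : ∀ ε : ℝ, 0 < ε → -(2 * ε * M) ≤ ∫ x, G x := by
    intro ε hε
    -- rescaled convex approximation of the positive part
    set φε : ℝ → ℝ := fun t => ε * Stmt0Aux.φ (t / ε) with hφεdef
    set ψε : ℝ → ℝ := fun t => Stmt0Aux.ψ (t / ε) with hψεdef
    have hφεd : ∀ t, HasDerivAt φε (ψε t) t := by
      intro t
      have h := (((Stmt0Aux.hasDerivAt_φ (t/ε)).comp t
        ((hasDerivAt_id t).div_const ε))).const_mul ε
      have he : ε * (Stmt0Aux.ψ (t/ε) * (1/ε)) = ψε t := by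
        field_simp
        rfl
      rw [← he]
      exact h
    have hψεd : ∀ t, HasDerivAt ψε (Stmt0Aux.ρ (t/ε) / Stmt0Aux.cρ * (1/ε)) t := fun t => by
      have := (Stmt0Aux.hasDerivAt_ψ (t/ε)).comp t ((hasDerivAt_id t).div_const ε); exact this
    have hψε'nn : ∀ t, 0 ≤ Stmt0Aux.ρ (t/ε) / Stmt0Aux.cρ * (1/ε) := fun t =>
      mul_nonneg (div_nonneg (Stmt0Aux.ρ_nonneg _) Stmt0Aux.cρ_pos.le)
        (by positivity)
    have hφεsmooth : ContDiff ℝ 2 φε :=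
      (contDiff_const.mul (Stmt0Aux.φ_contDiff.comp (contDiff_id.div_const ε))).of_le h2top
    have hφε0 : ∀ t, t ≤ ε → φε t = 0 := by
      intro t ht
      rw [hφεdef]
      simp only
      rw [Stmt0Aux.φ_zero ((div_le_one hε).mpr ht), mul_zero]
    have hφεup : ∀ t, 0 ≤ t → φε t ≤ t := by
      intro t ht
      have := Stmt0Aux.φ_le (div_nonneg ht hε.le)
      calc ε * Stmt0Aux.φ (t / ε) ≤ ε * (t / ε) := by nlinarith
        _ = t := by field_simp
    have hφεlow : ∀ t, 0 ≤ t → t - 2*ε ≤ φε t := by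
      intro t ht
      have := Stmt0Aux.φ_ge (div_nonneg ht hε.le)
      have h2 : ε * (t/ε - 2) ≤ ε * Stmt0Aux.φ (t / ε) := by nlinarith
      have h3 : ε * (t/ε - 2) = t - 2*ε := by field_simp
      rw [← h3]; exact h2
    -- the global C² truncation
    set V : En n → ℝ := fun x => if x ∈ Ω then ζ x * φε (u x) else 0 with hVdef
    have hVΩeq : ∀ y ∈ Ω, V y = ζ y * φε (u y) := fun y hy => if_pos hy
    set W : Set (En n) := Ω ∩ u ⁻¹' (Iio ε) with hWdef
    have hWopen : IsOpen W := hu_cont.isOpen_inter_preimage hΩ isOpen_Iio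
    have hVW0 : ∀ y ∈ W, V y = 0 := by
      intro y hy
      rw [hVΩeq y hy.1, hφε0 (u y) (le_of_lt hy.2), mul_zero]
    have hVsmooth : ContDiff ℝ 2 V := by
      rw [contDiff_iff_contDiffAt]
      intro x
      by_cases hxts : x ∈ tsupport ζ
      · have hxΩ : x ∈ Ω := hζΩ hxts
        rcases lt_or_ge (u x) ε with hlt | hge
        · apply ContDiffAt.congr_of_eventuallyEq (contDiffAt_const (c := (0:ℝ)))
          filter_upwards [hWopen.mem_nhds ⟨hxΩ, hlt⟩] with y hy
          exact hVW0 y hy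
        · have hxS : x ∈ S := ⟨hxΩ, lt_of_lt_of_le hε hge⟩
          have h1 : ContDiffAt ℝ 2 (fun y => ζ y * φε (u y)) x :=
            ((hζsmooth.of_le h2top).contDiffAt).mul
              (hφεsmooth.contDiffAt.comp x (hu_c2'.contDiffAt (hSopen.mem_nhds hxS)))
          apply h1.congr_of_eventuallyEq
          filter_upwards [hΩ.mem_nhds hxΩ] with y hy
          exact hVΩeq y hy
      · apply ContDiffAt.congr_of_eventuallyEq (contDiffAt_const (c := (0:ℝ)))
        filter_upwards [(isClosed_tsupport ζ).isOpen_compl.mem_nhds hxts] with y hy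
        by_cases hyΩ : y ∈ Ω
        · rw [hVΩeq y hyΩ, image_eq_zero_of_notMem_tsupport hy, zero_mul]
        · exact if_neg hyΩ
    have hV0 : ∀ x, x ∉ tsupport ζ → V x = 0 := by
      intro x hx
      by_cases hxΩ : x ∈ Ω
      · rw [hVΩeq x hxΩ, image_eq_zero_of_notMem_tsupport hx, zero_mul]
      · exact if_neg hxΩ
    have hVcs : HasCompactSupport V := HasCompactSupport.intro hζcs hV0
    -- positivity of η · lap V
    have hkey : ∀ x, 0 ≤ lap V x * η x := by
      intro x
      by_cases hxK : x ∈ K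
      · have hxΩ : x ∈ Ω := hKΩ hxK
        have hVNeq : V =ᶠ[𝓝 x] fun y => φε (u y) := by
          filter_upwards [(hNopen.inter hΩ).mem_nhds ⟨hKN hxK, hxΩ⟩] with y hy
          rw [hVΩeq y hy.2, hζN y hy.1, one_mul]
        rw [lap_congr hVNeq]
        rcases lt_or_ge (u x) ε with hlt | hge
        · have hev : (fun y => φε (u y)) =ᶠ[𝓝 x] fun _ => (0:ℝ) := by
            filter_upwards [hWopen.mem_nhds ⟨hxΩ, hlt⟩] with y hy
            rw [hφε0 (u y) (le_of_lt hy.2)]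
          rw [lap_eventually_zero hev, zero_mul]
        · have hxS : x ∈ S := ⟨hxΩ, lt_of_lt_of_le hε hge⟩
          have h0 := lap_comp_nonneg hSopen hxS hu_c2' hφεd hψεd hψε'nn
            (hu_harm x hxΩ (lt_of_lt_of_le hε hge))
          exact mul_nonneg h0 (hηnn x)
      · rw [image_eq_zero_of_notMem_tsupport hxK, mul_zero]
    -- integration by parts
    have hibp : ∫ x, V x * lap η x = ∫ x, lap V x * η x :=
      integral_mul_lap_eq hVsmooth hVcs hetaTop hηc
    have hlapVcont : Continuous (lap V) := continuous_lap hVsmooth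
    have hlapVηint : Integrable (fun x => lap V x * η x) :=
      (hlapVcont.mul hη.continuous).integrable_of_hasCompactSupport (hηc.mul_left)
    have hH : 0 ≤ ∫ x, V x * lap η x := by
      rw [hibp]
      exact integral_nonneg hkey
    set H := fun x => V x * lap η x with hHdef
    have hHcont : Continuous H := hVsmooth.continuous.mul hlapη_cont
    have hHcs : HasCompactSupport H :=
      HasCompactSupport.intro hKc (fun x hx => by simp [hHdef, hlapη0 x hx])
    have hHint : Integrable H := hHcont.integrable_of_hasCompactSupport hHcs
    have hdiff_bound : ∀ x, |G x - H x| ≤ 2 * ε * |lap η x| := by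
      intro x
      by_cases hxK : x ∈ K
      · have hxΩ : x ∈ Ω := hKΩ hxK
        have hVx : V x = φε (u x) := by
          rw [hVΩeq x hxΩ, hζN x (hKN hxK), one_mul]
        have hu0 : 0 ≤ u x := hu_nonneg x hxΩ
        have h1 : 0 ≤ u x - φε (u x) := sub_nonneg.mpr (hφεup _ hu0)
        have h2 : u x - φε (u x) ≤ 2*ε := by
          have := hφεlow _ hu0
          linarith
        have hGH : G x - H x = (u x - φε (u x)) * lap η x := by
          rw [hGdef, hHdef]
          simp only
          rw [hVx]
          ring
        rw [hGH, abs_mul]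
        apply mul_le_mul_of_nonneg_right _ (abs_nonneg _)
        rw [abs_of_nonneg h1]
        exact h2
      · have h0 := hlapη0 x hxK
        simp [hGdef, hHdef, h0]
    have habs : |∫ x, (G x - H x)| ≤ 2 * ε * M := by
      calc |∫ x, (G x - H x)| ≤ ∫ x, |G x - H x| := by
            simpa [Real.norm_eq_abs] using
              norm_integral_le_integral_norm (μ := volume) (fun x => G x - H x)
        _ ≤ ∫ x, 2 * ε * |lap η x| := by
            apply integral_mono (hGint.sub hHint).abs (hlapabs_int.const_mul _) hdiff_bound
        _ = 2 * ε * M := by rw [MeasureTheory.integral_const_mul]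
    have hsplit : ∫ x, (G x - H x) = (∫ x, G x) - ∫ x, H x := integral_sub hGint hHint
    have hHnn : (0:ℝ) ≤ ∫ x, H x := hH
    have hlow := neg_abs_le (∫ x, (G x - H x))
    rw [hsplit] at hlow habs
    have : -(2 * ε * M) ≤ (∫ x, G x) - ∫ x, H x := by
      have := (abs_le.mp habs).1
      linarith
    linarith
  -- conclude
  have hfin : ∀ d : ℝ, 0 < d → -(∫ x, G x) ≤ 0 + d := by
    intro d hd
    have hεpos : 0 < d / (2 * M + 1) := by positivity
    have h1 := main (d / (2 * M + 1)) hεpos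
    have h2 : 2 * (d / (2 * M + 1)) * M ≤ d := by
      have hpos : (0:ℝ) < 2 * M + 1 := by positivity
      have heq : 2 * (d / (2 * M + 1)) * M = (2 * M * d) / (2 * M + 1) := by ring
      rw [heq, div_le_iff₀ hpos]
      nlinarith
    linarith
  have := le_of_forall_pos_le_add hfin
  linarith
end
end

section
/- Let h : [−1,1] → [0,∞) with h(t) = β_+ t_+ + β_− t_− (both one-homogeneous pieces, β_± ≥ 0), viewed as a function v(x) = h(x_n) on an annular region A' ⊂ ℝⁿ (n ≥ 2) containing a neighborhood of a point (x', 0). If ∫ (h'(x_n))² ∂_n ξ_n dx = 0 for all ξ ∈ C_c^1(A'; ℝⁿ), then β_+ = β_−. -/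
open MeasureTheory Metric Set Filter
open scoped RealInnerProductSpace ENNReal Topology NNReal

noncomputable section

lemma deriv_h_pos {βp βm : ℝ} {h : ℝ → ℝ} (hh : ∀ t, h t = βp * max t 0 + βm * max (-t) 0)
    {t : ℝ} (ht : 0 < t) : deriv h t = βp := by
  have he : h =ᶠ[nhds t] fun s => βp * s := by
    filter_upwards [Ioi_mem_nhds ht] with s hs
    have hs' : (0:ℝ) < s := hs
    rw [hh s, max_eq_left hs'.le, max_eq_right (by linarith : -s ≤ 0)]
    ring
  rw [he.deriv_eq]
  simpa using ((hasDerivAt_id t).const_mul βp).deriv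

lemma deriv_h_neg {βp βm : ℝ} {h : ℝ → ℝ} (hh : ∀ t, h t = βp * max t 0 + βm * max (-t) 0)
    {t : ℝ} (ht : t < 0) : deriv h t = -βm := by
  have he : h =ᶠ[nhds t] fun s => -βm * s := by
    filter_upwards [Iio_mem_nhds ht] with s hs
    have hs' : s < 0 := hs
    rw [hh s, max_eq_right hs'.le, max_eq_left (by linarith : 0 ≤ -s)]
    ring
  rw [he.deriv_eq]
  simpa using ((hasDerivAt_id t).const_mul (-βm)).deriv

lemma oneD {βp βm : ℝ} {h : ℝ → ℝ} (hh : ∀ t, h t = βp * max t 0 + βm * max (-t) 0)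
    (B : ContDiffBump (0:ℝ)) :
    ∫ t : ℝ, (deriv h t) ^ 2 * deriv B t = βm ^ 2 - βp ^ 2 := by
  have hBc : Continuous (deriv B) := (B.contDiff (n := 1)).continuous_deriv le_rfl
  have hBcs : HasCompactSupport (deriv B) := B.hasCompactSupport.deriv
  have hBint : Integrable (deriv B) := hBc.integrable_of_hasCompactSupport hBcs
  have hBd : ∀ x : ℝ, HasDerivAt B (deriv B x) x := fun x =>
    ((B.contDiff (n := 1)).differentiable (by simp) x).hasDerivAt
  have hB0 : B 0 = 1 := B.one_of_mem_closedBall (mem_closedBall_self B.rIn_pos.le)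
  -- tendsto 0 at ±∞
  have htop : Tendsto (B : ℝ → ℝ) atTop (nhds 0) := by
    apply Tendsto.congr' _ tendsto_const_nhds
    filter_upwards [eventually_ge_atTop B.rOut] with x hx
    exact (B.zero_of_le_dist (by simpa [Real.dist_eq, abs_of_nonneg (B.rOut_pos.le.trans hx)] using hx)).symm
  have hbot : Tendsto (B : ℝ → ℝ) atBot (nhds 0) := by
    apply Tendsto.congr' _ tendsto_const_nhds
    filter_upwards [eventually_le_atBot (-B.rOut)] with x hx
    refine (B.zero_of_le_dist ?_).symm
    have : (0:ℝ) < B.rOut := B.rOut_pos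
    rw [Real.dist_eq]
    rw [abs_of_nonpos (by linarith)]
    linarith
  set f : ℝ → ℝ := fun t => (deriv h t) ^ 2 * deriv B t with hf_def
  have hfmeas : AEStronglyMeasurable f volume :=
    (((measurable_deriv h).pow_const 2).mul hBc.measurable).aestronglyMeasurable
  set C : ℝ := max (βp ^ 2) (max (βm ^ 2) ((deriv h 0) ^ 2)) with hC_def
  have hfint : Integrable f := by
    refine Integrable.mono' ((hBint.norm).const_mul C) hfmeas ?_
    filter_upwards with t
    have h1 : (deriv h t) ^ 2 ≤ C := by
      rcases lt_trichotomy t 0 with ht | ht | ht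
      · rw [deriv_h_neg hh ht, neg_sq]
        exact le_max_of_le_right (le_max_left _ _)
      · subst ht
        exact le_max_of_le_right (le_max_right _ _)
      · rw [deriv_h_pos hh ht]
        exact le_max_left _ _
    show ‖(deriv h t) ^ 2 * deriv B t‖ ≤ C * ‖deriv B t‖
    rw [norm_mul]
    refine mul_le_mul_of_nonneg_right ?_ (norm_nonneg _)
    rwa [Real.norm_eq_abs, abs_of_nonneg (sq_nonneg _)]
  have hIoi : ∫ t in Ioi (0:ℝ), f t = -βp ^ 2 := by
    have he : EqOn f (fun t => βp ^ 2 * deriv B t) (Ioi 0) := by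
      intro t ht
      simp only [hf_def]
      rw [deriv_h_pos hh ht]
    rw [setIntegral_congr_fun measurableSet_Ioi he, integral_const_mul,
      integral_Ioi_of_hasDerivAt_of_tendsto' (fun x _ => hBd x) hBint.integrableOn htop, hB0]
    ring
  have hIic : ∫ t in Iic (0:ℝ), f t = βm ^ 2 := by
    have h0 : ∀ᵐ t : ℝ, t ≠ 0 := by
      refine ae_iff.mpr ?_
      simp [setOf_eq_eq_singleton']
    have he : ∀ᵐ t, t ∈ Iic (0:ℝ) → f t = βm ^ 2 * deriv B t := by
      filter_upwards [h0] with t ht0 ht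
      have : t < 0 := lt_of_le_of_ne ht ht0
      simp only [hf_def]
      rw [deriv_h_neg hh this]
      ring
    rw [setIntegral_congr_ae measurableSet_Iic he, integral_const_mul,
      integral_Iic_of_hasDerivAt_of_tendsto' (fun x _ => hBd x) hBint.integrableOn hbot, hB0]
    ring
  have htot := intervalIntegral.integral_Iic_add_Ioi (b := (0:ℝ)) (μ := volume)
    hfint.integrableOn hfint.integrableOn
  rw [hIic, hIoi] at htot
  show ∫ t, f t = βm ^ 2 - βp ^ 2
  rw [← htot]
  ring

theorem stmt_15 {n : ℕ} (hn : 2 ≤ n) (k : Fin n) (βp βm : ℝ)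
    (hβp : 0 ≤ βp) (hβm : 0 ≤ βm)
    (h : ℝ → ℝ) (hh : ∀ t, h t = βp * max t 0 + βm * max (-t) 0)
    (A : Set (En n)) (hA : IsOpen A) (p : En n) (hp : p ∈ A) (hpk : p k = 0)
    (hvar : ∀ ξ : En n → En n, ContDiff ℝ 1 ξ → HasCompactSupport ξ →
      tsupport ξ ⊆ A →
      ∫ x in A, (deriv h (x k)) ^ 2 * (fderiv ℝ ξ x (EuclideanSpace.single k 1)) k = 0) :
    βp = βm := by
  classical
  obtain ⟨R, hR0, hRA⟩ := Metric.isOpen_iff.mp hA p hp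
  have hn1 : (1:ℝ) ≤ (n:ℝ) := by exact_mod_cast le_trans (by norm_num) hn
  have hnpos : (0:ℝ) < n := by linarith
  set r : ℝ := R / (2 * n) with hr_def
  have hr0 : 0 < r := by positivity
  set B : ContDiffBump (0:ℝ) := ⟨r/2, r, by positivity, by linarith⟩ with hB_def
  have hBrOut : B.rOut = r := rfl
  have hBd : ∀ x : ℝ, HasDerivAt B (deriv B x) x := fun x =>
    ((B.contDiff (n := 1)).differentiable (by simp) x).hasDerivAt
  set φ : En n → ℝ := fun x => ∏ i, B (x i - p i) with hφ_def
  set c : En n := EuclideanSpace.single k (1:ℝ) with hc_def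
  set ξ : En n → En n := fun x => φ x • c with hξ_def
  -- regularity
  have hφC : ContDiff ℝ 1 φ := by
    apply contDiff_prod
    intro i _
    exact (B.contDiff (n := 1)).comp
      ((EuclideanSpace.proj (𝕜 := ℝ) i).contDiff.sub contDiff_const)
  have hξC : ContDiff ℝ 1 ξ := hφC.smul contDiff_const
  -- derivative of φ
  have hΦ : ∀ x : En n, HasFDerivAt φ
      (∑ i, (∏ j ∈ Finset.univ.erase i, B (x j - p j)) •
        ((deriv B (x i - p i)) • (EuclideanSpace.proj (𝕜 := ℝ) i))) x := by
    intro x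
    exact HasFDerivAt.finset_prod (fun i _ => by
      have := (hBd (x i - p i)).comp_hasFDerivAt x
        ((EuclideanSpace.proj (𝕜 := ℝ) i).hasFDerivAt.sub_const (p i))
      exact this)
  have hev : ∀ x : En n, (fderiv ℝ ξ x (EuclideanSpace.single k 1)) k
      = deriv B (x k - p k) * ∏ j ∈ Finset.univ.erase k, B (x j - p j) := by
    intro x
    have hξx : HasFDerivAt ξ (ContinuousLinearMap.smulRight
        (∑ i, (∏ j ∈ Finset.univ.erase i, B (x j - p j)) •
          ((deriv B (x i - p i)) • (EuclideanSpace.proj (𝕜 := ℝ) i))) c) x :=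
      (hΦ x).smul_const c
    rw [hξx.fderiv]
    simp only [ContinuousLinearMap.smulRight_apply, ContinuousLinearMap.coe_sum',
      Finset.sum_apply, ContinuousLinearMap.coe_smul', Pi.smul_apply, smul_eq_mul]
    have hck : c k = 1 := by simp [hc_def, EuclideanSpace.single_apply]
    rw [PiLp.smul_apply, hck, smul_eq_mul, mul_one]
    rw [Finset.sum_eq_single k]
    · have : (EuclideanSpace.proj (𝕜 := ℝ) k) (EuclideanSpace.single k (1:ℝ)) = 1 := by
        simp [EuclideanSpace.single_apply]
      rw [this]; ring
    · intro i _ hik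
      have : (EuclideanSpace.proj (𝕜 := ℝ) i) (EuclideanSpace.single k (1:ℝ)) = 0 := by
        simp [EuclideanSpace.single_apply, hik]
      rw [this]; ring
    · intro habs; exact absurd (Finset.mem_univ k) habs
  -- support
  have hsupp : tsupport ξ ⊆ closedBall p (R/2) := by
    have hsub : Function.support ξ ⊆ closedBall p (R/2) := by
      intro x hx
      have hφx : φ x ≠ 0 := by
        intro h0
        apply hx
        simp [hξ_def, h0]
      have hcoord : ∀ i, dist (x i) (p i) < r := by
        intro i
        have := Finset.prod_ne_zero_iff.mp hφx i (Finset.mem_univ i)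
        have hmem : x i - p i ∈ Function.support (B : ℝ → ℝ) := this
        rw [B.support_eq] at hmem
        simpa [Real.dist_eq] using hmem
      have hd : dist x p ≤ n * r := by
        rw [EuclideanSpace.dist_eq]
        have hsum : ∑ i, dist (x i) (p i) ^ 2 ≤ (n : ℝ) * r ^ 2 := by
          calc ∑ i, dist (x i) (p i) ^ 2 ≤ ∑ _i : Fin n, r ^ 2 := by
                apply Finset.sum_le_sum
                intro i _
                have h1 := (hcoord i).le
                have h0 : (0:ℝ) ≤ dist (x i) (p i) := dist_nonneg
                nlinarith
            _ = (n : ℝ) * r ^ 2 := by simp [mul_comm]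
        calc Real.sqrt (∑ i, dist (x i) (p i) ^ 2) ≤ Real.sqrt (((n:ℝ) * r)^2) := by
              apply Real.sqrt_le_sqrt
              nlinarith
          _ = (n : ℝ) * r := Real.sqrt_sq (by positivity)
      have : (n : ℝ) * r = R / 2 := by
        field_simp [hr_def]
        rw [hr_def]; field_simp
      rw [this] at hd
      exact hd
    exact closure_minimal hsub Metric.isClosed_closedBall
  have hsuppA : tsupport ξ ⊆ A := by
    refine subset_trans hsupp (subset_trans ?_ hRA)
    intro x hx
    calc dist x p ≤ R/2 := hx
      _ < R := by linarith
  have hcs : HasCompactSupport ξ :=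
    (isCompact_closedBall p (R/2)).of_isClosed_subset isClosed_closure hsupp
  -- the variational identity
  have hI := hvar ξ hξC hcs hsuppA
  -- extend to whole space
  set F : Fin n → ℝ → ℝ := fun i t =>
    if i = k then (deriv h t) ^ 2 * deriv B (t - p i) else B (t - p i) with hF_def
  have hGprod : ∀ x : En n,
      (deriv h (x k)) ^ 2 * (fderiv ℝ ξ x (EuclideanSpace.single k 1)) k
        = ∏ i, F i (x i) := by
    intro x
    rw [hev x]
    rw [← Finset.mul_prod_erase Finset.univ (fun i => F i (x i)) (Finset.mem_univ k)]
    have h1 : F k (x k) = (deriv h (x k)) ^ 2 * deriv B (x k - p k) := by simp [hF_def]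
    have h2 : ∏ j ∈ Finset.univ.erase k, F j (x j)
        = ∏ j ∈ Finset.univ.erase k, B (x j - p j) := by
      apply Finset.prod_congr rfl
      intro j hj
      simp [hF_def, Finset.ne_of_mem_erase hj]
    rw [h1, h2]
    ring
  have hext : ∫ x in A, (deriv h (x k)) ^ 2 *
      (fderiv ℝ ξ x (EuclideanSpace.single k 1)) k
      = ∫ x : En n, ∏ i, F i (x i) := by
    rw [setIntegral_eq_integral_of_forall_compl_eq_zero]
    · exact integral_congr_ae (Filter.Eventually.of_forall hGprod)
    · intro x hx
      have hxn : x ∉ tsupport ξ := fun hmem => hx (hsuppA hmem)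
      have : fderiv ℝ ξ x = 0 :=
        image_eq_zero_of_notMem_tsupport (fun hmem => hxn (tsupport_fderiv_subset ℝ hmem))
      rw [this]
      simp
  -- Fubini
  have hfub : ∫ x : En n, ∏ i, F i (x i) = ∏ i, ∫ t : ℝ, F i t := by
    have e := (EuclideanSpace.volume_preserving_symm_measurableEquiv_toLp (Fin n)).symm
    rw [← e.integral_comp (MeasurableEquiv.measurableEmbedding _)]
    rw [← MeasureTheory.integral_fintype_prod_eq_prod (ι := Fin n) F]
    rfl
  have hFk : ∫ t : ℝ, F k t = βm ^ 2 - βp ^ 2 := by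
    have : ∀ t : ℝ, F k t = (deriv h t) ^ 2 * deriv B t := by
      intro t; simp [hF_def, hpk]
    simp_rw [this]
    exact oneD hh B
  have hFj : ∀ j : Fin n, j ≠ k → ∫ t : ℝ, F j t = ∫ t : ℝ, B t := by
    intro j hj
    have : ∀ t : ℝ, F j t = B (t - p j) := by intro t; simp [hF_def, hj]
    simp_rw [this]
    exact integral_sub_right_eq_self (B : ℝ → ℝ) (p j)
  have hprod_pos : 0 < ∏ j ∈ Finset.univ.erase k, ∫ t : ℝ, F j t := by
    apply Finset.prod_pos
    intro j hj
    rw [hFj j (Finset.ne_of_mem_erase hj)]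
    exact B.integral_pos
  have hfinal : (βm ^ 2 - βp ^ 2) * (∏ j ∈ Finset.univ.erase k, ∫ t : ℝ, F j t) = 0 := by
    rw [← hFk]
    rw [Finset.mul_prod_erase Finset.univ (fun i => ∫ t : ℝ, F i t) (Finset.mem_univ k)]
    rw [← hfub, ← hext, hI]
  have hsq : βp ^ 2 = βm ^ 2 := by
    rcases mul_eq_zero.mp hfinal with h1 | h1
    · linarith
    · exact absurd h1 hprod_pos.ne'
  have h3 : (βp - βm) * (βp + βm) = 0 := by nlinarith
  rcases mul_eq_zero.mp h3 with h4 | h4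
  · linarith
  · linarith
end
end

section
/- Let w solve Δw = β_ε(w) on a domain Ω ⊆ ℝⁿ, where β_ε(s) = ε^{-1} β(s/ε), β Lipschitz, β > 0 on (0,1), β ≡ 0 outside (0,1), ∫₀¹ β = 1/2. Set χ_ε(x) = 2 B_ε(w(x)) with B_ε(z) = ∫₀^z β_ε(s) ds. Then for all φ ∈ C_c^1(Ω; ℝⁿ): ∫_Ω (|∇w|² div φ − 2 ∇w · Dφ ∇w + χ_ε div φ) dx = 0. -/
open MeasureTheory Metric Set Filter
open scoped RealInnerProductSpace ENNReal Topology NNReal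

noncomputable section

lemma pi_div_integral_zero {m : ℕ} (g : (Fin (m+1) → ℝ) → (Fin (m+1) → ℝ))
    (g' : (Fin (m+1) → ℝ) → ((Fin (m+1) → ℝ) →L[ℝ] (Fin (m+1) → ℝ)))
    (hd : ∀ x, HasFDerivAt g (g' x) x) (hsupp : HasCompactSupport g)
    (hi : Integrable (fun x => ∑ i, g' x (Pi.single i 1) i)) :
    ∫ x, ∑ i, g' x (Pi.single i 1) i = 0 := by
  obtain ⟨R, hR0, hRs⟩ : ∃ R, 0 < R ∧ tsupport g ⊆ ball 0 R :=
    (hsupp.isBounded.subset_ball_lt 0 0).imp fun R hR => ⟨hR.1, hR.2⟩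
  set a : Fin (m+1) → ℝ := fun _ => -R with ha
  set b : Fin (m+1) → ℝ := fun _ => R with hb
  have hab : a ≤ b := fun i => by simp only [ha, hb]; linarith
  have hout : ∀ y : Fin (m+1) → ℝ, R ≤ ‖y‖ → g y = 0 := by
    intro y hy
    apply image_eq_zero_of_notMem_tsupport
    intro hmem
    have := hRs hmem
    rw [mem_ball, dist_zero_right] at this
    linarith
  have key := integral_divergence_of_hasFDerivAt_off_countable a b hab g g' ∅
    countable_empty (fun x _ => (hd x).continuousAt.continuousWithinAt)
    (fun x _ => hd x) hi.integrableOn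
  have hface : ∀ (i : Fin (m+1)) (c : ℝ), R ≤ |c| →
      ∀ x : Fin m → ℝ, g (Fin.insertNth i c x) i = 0 := by
    intro i c hc x
    have h1 : R ≤ ‖(Fin.insertNth i c x : Fin (m+1) → ℝ)‖ := by
      refine hc.trans ?_
      have := norm_le_pi_norm (Fin.insertNth i c x : Fin (m+1) → ℝ) i
      simpa [Fin.insertNth_apply_same] using this
    rw [hout _ h1]; rfl
  have hRHS : (∑ i : Fin (m + 1),
        ((∫ (x : Fin m → ℝ) in Icc (a ∘ i.succAbove) (b ∘ i.succAbove), g (i.insertNth (b i) x) i) -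
          ∫ (x : Fin m → ℝ) in Icc (a ∘ i.succAbove) (b ∘ i.succAbove), g (i.insertNth (a i) x) i))
      = 0 := by
    refine Finset.sum_eq_zero fun i _ => ?_
    rw [integral_congr_ae (Filter.Eventually.of_forall fun x => hface i (b i) (by simp [hb, abs_of_pos hR0]) x),
      integral_congr_ae (Filter.Eventually.of_forall fun x => hface i (a i) (by simp [ha, abs_of_pos hR0]) x)]
    simp
  rw [hRHS] at key
  rw [← key]
  symm
  apply setIntegral_eq_integral_of_forall_compl_eq_zero
  intro x hx
  have hxn : R < ‖x‖ := by
    rw [Set.mem_Icc, not_and_or] at hx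
    obtain ⟨i, hi⟩ : ∃ i, R < |x i| := by
      rcases hx with h | h
      · rw [Pi.le_def, not_forall] at h
        obtain ⟨i, hi⟩ := h
        refine ⟨i, ?_⟩
        rw [not_le] at hi
        simp only [ha] at hi
        rw [lt_abs]; right; linarith
      · rw [Pi.le_def, not_forall] at h
        obtain ⟨i, hi⟩ := h
        refine ⟨i, ?_⟩
        rw [not_le] at hi
        simp only [hb] at hi
        exact lt_of_lt_of_le hi (le_abs_self _)
    exact hi.trans_le (norm_le_pi_norm x i)
  have hnots : x ∉ tsupport g := fun hmem => by
    have := hRs hmem; rw [mem_ball, dist_zero_right] at this; linarith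
  have hg0 : g' x = 0 := by
    have : fderiv ℝ g x = 0 := by
      have hev : g =ᶠ[nhds x] (fun _ => 0) := by
        filter_upwards [(isClosed_tsupport g).isOpen_compl.mem_nhds hnots] with y hy
        using image_eq_zero_of_notMem_tsupport hy
      rw [hev.fderiv_eq, fderiv_fun_const]; rfl
    rw [← (hd x).fderiv, this]
  simp [hg0]

lemma clm_sum_mul {n : ℕ} (ℓ : En n →L[ℝ] ℝ) (u : En n) :
    ∑ i, ℓ (EuclideanSpace.single i 1) * u i = ℓ u := by
  have hu : u = ∑ i, u i • (EuclideanSpace.single i 1 : En n) := by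
    have := (EuclideanSpace.basisFun (Fin n) ℝ).sum_repr u
    simp only [EuclideanSpace.basisFun_repr, EuclideanSpace.basisFun_apply] at this
    exact this.symm
  conv_rhs => rw [hu]
  rw [map_sum]
  exact Finset.sum_congr rfl fun i _ => by rw [ℓ.map_smul]; simp [mul_comm]

lemma coord_eq_inner {n : ℕ} (u : En n) (i : Fin n) :
    u i = ⟪u, EuclideanSpace.single i 1⟫ := by
  rw [EuclideanSpace.inner_single_right]; simp

lemma toDual_symm_coord {n : ℕ} (ℓ : En n →L[ℝ] ℝ) (i : Fin n) :
    ((InnerProductSpace.toDual ℝ (En n)).symm ℓ) i = ℓ (EuclideanSpace.single i 1) := by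
  rw [coord_eq_inner ((InnerProductSpace.toDual ℝ (En n)).symm ℓ) i]
  exact InnerProductSpace.toDual_symm_apply

def dualIso (n : ℕ) : (En n →L[ℝ] ℝ) →L[ℝ] En n :=
  ∑ i, (ContinuousLinearMap.apply ℝ ℝ (EuclideanSpace.single i 1)).smulRight
    (EuclideanSpace.single i 1)

lemma dualIso_coord {n : ℕ} (ℓ : En n →L[ℝ] ℝ) (j : Fin n) :
    (dualIso n ℓ) j = ℓ (EuclideanSpace.single j 1) := by
  simp only [dualIso, ContinuousLinearMap.sum_apply, ContinuousLinearMap.smulRight_apply,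
    ContinuousLinearMap.apply_apply]
  have : ∀ i : Fin n, ((ℓ (EuclideanSpace.single i 1)) • (EuclideanSpace.single i 1 : En n)) j
      = ℓ (EuclideanSpace.single i 1) * (if j = i then 1 else 0) := by
    intro i
    rw [PiLp.smul_apply, smul_eq_mul, EuclideanSpace.single_apply]
  calc (∑ i, (ℓ (EuclideanSpace.single i 1)) • (EuclideanSpace.single i 1 : En n)) j
      = ∑ i, ((ℓ (EuclideanSpace.single i 1)) • (EuclideanSpace.single i 1 : En n)) j := by
        rw [WithLp.ofLp_sum, Finset.sum_apply]
    _ = ∑ i, ℓ (EuclideanSpace.single i 1) * (if j = i then 1 else 0) :=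
        Finset.sum_congr rfl fun i _ => this i
    _ = ℓ (EuclideanSpace.single j 1) := by simp
  
lemma dualIso_inner {n : ℕ} (ℓ : En n →L[ℝ] ℝ) (v : En n) :
    ⟪dualIso n ℓ, v⟫ = ℓ v := by
  rw [PiLp.inner_apply]
  simp only [RCLike.inner_apply, conj_trivial]
  rw [Finset.sum_congr rfl fun i _ => mul_comm _ _]
  calc ∑ i, (dualIso n ℓ) i * v i
      = ∑ i, ℓ (EuclideanSpace.single i 1) * v i :=
        Finset.sum_congr rfl fun i _ => by rw [dualIso_coord]
    _ = ℓ v := clm_sum_mul ℓ v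

lemma gradient_eq_dualIso {n : ℕ} (f : En n → ℝ) (y : En n) :
    gradient f y = dualIso n (fderiv ℝ f y) := by
  ext i
  rw [dualIso_coord]
  exact toDual_symm_coord _ i

lemma divg_integral_zero {n : ℕ} (V : En n → En n) (hV : ContDiff ℝ 1 V)
    (hc : HasCompactSupport V) : ∫ x, divg V x = 0 := by
  have hdVc : Continuous (divg V) := by
    apply continuous_finset_sum
    intro i _
    exact (PiLp.continuous_apply 2 (fun _ : Fin n => ℝ) i).comp
      (((hV.continuous_fderiv one_ne_zero).clm_apply continuous_const))
  have hsupp : HasCompactSupport (divg V) := by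
    refine IsCompact.of_isClosed_subset hc (isClosed_closure) (closure_minimal ?_ (isClosed_closure))
    intro x hx
    by_contra hmem
    apply hx
    have hev : V =ᶠ[nhds x] (fun _ => 0) := by
      filter_upwards [(isClosed_tsupport V).isOpen_compl.mem_nhds hmem] with y hy
      using image_eq_zero_of_notMem_tsupport hy
    have : fderiv ℝ V x = 0 := by rw [hev.fderiv_eq, fderiv_fun_const]; rfl
    simp [divg, this]
  have hint : Integrable (divg V) := hdVc.integrable_of_hasCompactSupport hsupp
  cases n with
  | zero => simp [divg]
  | succ m =>
    set L := PiLp.continuousLinearEquiv 2 ℝ (fun _ : Fin (m+1) => ℝ) with hL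
    set g : (Fin (m+1) → ℝ) → (Fin (m+1) → ℝ) := fun x => L (V (L.symm x)) with hg
    set g' : (Fin (m+1) → ℝ) → ((Fin (m+1) → ℝ) →L[ℝ] (Fin (m+1) → ℝ)) :=
      fun x => ((L : En (m+1) →L[ℝ] (Fin (m+1) → ℝ)).comp (fderiv ℝ V (L.symm x))).comp
        (L.symm : (Fin (m+1) → ℝ) →L[ℝ] En (m+1)) with hg'
    have hd : ∀ x, HasFDerivAt g (g' x) x := by
      intro x
      exact (L.toContinuousLinearMap.hasFDerivAt).comp _
        (((hV.differentiable one_ne_zero) _).hasFDerivAt.comp _ L.symm.toContinuousLinearMap.hasFDerivAt)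
    have hcg : HasCompactSupport g := by
      have : g = (L : En (m+1) → (Fin (m+1) → ℝ)) ∘ V ∘ (L.symm : (Fin (m+1) → ℝ) → En (m+1)) := rfl
      rw [this]
      exact (hc.comp_homeomorph L.symm.toHomeomorph).comp_left (g := (L : En (m+1) → (Fin (m+1) → ℝ))) (by simp)
    have hdiv : ∀ x, (∑ i, g' x (Pi.single i 1) i) = divg V (L.symm x) := by
      intro x
      simp only [hg', divg, ContinuousLinearMap.comp_apply]
      congr 1
    have hψ : MeasurePreserving ((MeasurableEquiv.toLp 2 (Fin (m+1) → ℝ))) volume volume :=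
      (EuclideanSpace.volume_preserving_symm_measurableEquiv_toLp _).symm
    have hcoe : ((MeasurableEquiv.toLp 2 (Fin (m+1) → ℝ)) : (Fin (m+1) → ℝ) → En (m+1))
        = (L.symm : (Fin (m+1) → ℝ) → En (m+1)) := rfl
    have := hψ.integral_comp' (f := (MeasurableEquiv.toLp 2 (Fin (m+1) → ℝ))) (divg V)
    rw [← this]
    have : ∫ x : Fin (m+1) → ℝ, divg V ((MeasurableEquiv.toLp 2 (Fin (m+1) → ℝ)) x)
        = ∫ x : Fin (m+1) → ℝ, ∑ i, g' x (Pi.single i 1) i := by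
      refine integral_congr_ae (Filter.Eventually.of_forall fun x => ?_)
      simp only [hcoe]
      exact (hdiv x).symm
    rw [this]
    apply pi_div_integral_zero g g' hd hcg
    rw [show (fun x => ∑ i, g' x (Pi.single i 1) i) = fun x => divg V (L.symm x) from funext hdiv]
    rw [← hcoe]
    exact (hψ.integrable_comp_emb (MeasurableEquiv.toLp 2 (Fin (m+1) → ℝ)).measurableEmbedding).2 hint

theorem stmt_19 {n : ℕ} (Ω : Set (En n)) (hΩ : IsOpen Ω)
    (β : ℝ → ℝ) (K : ℝ≥0) (hβlip : LipschitzWith K β)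
    (hβpos : ∀ s ∈ Ioo (0 : ℝ) 1, 0 < β s)
    (hβzero : ∀ s, s ∉ Ioo (0 : ℝ) 1 → β s = 0)
    (hβint : ∫ s in (0 : ℝ)..1, β s = 1 / 2)
    (ε : ℝ) (hε : 0 < ε)
    (w : En n → ℝ) (hw_smooth : ContDiffOn ℝ 2 w Ω)
    (hw_eq : ∀ x ∈ Ω, lap w x = (1 / ε) * β (w x / ε))
    (χε : En n → ℝ)
    (hχε : ∀ x, χε x = 2 * ∫ s in (0 : ℝ)..(w x), (1 / ε) * β (s / ε))
    (φ : En n → En n) (hφ : ContDiff ℝ 1 φ) (hφc : HasCompactSupport φ)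
    (hφs : tsupport φ ⊆ Ω) :
    ∫ x in Ω, (‖gradient w x‖ ^ 2 * divg φ x
      - 2 * ⟪gradient w x, fderiv ℝ φ x (gradient w x)⟫
      + χε x * divg φ x) = 0 := by
  classical
  set βe : ℝ → ℝ := fun s => (1/ε) * β (s/ε) with hβe
  have hβec : Continuous βe := continuous_const.mul (hβlip.continuous.comp (continuous_id.div_const ε))
  set B : ℝ → ℝ := fun z => ∫ s in (0:ℝ)..z, βe s with hBdef
  have hBd : ∀ z, HasDerivAt B (βe z) z := fun z => (hβec.integral_hasStrictDerivAt 0 z).hasDerivAt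
  have hB1 : ContDiff ℝ 1 B := contDiff_one_iff_deriv.2 ⟨fun z => (hBd z).differentiableAt, by
      have : deriv B = βe := funext fun z => (hBd z).deriv
      rw [this]; exact hβec⟩
  have hχeq : χε = fun y => 2 * B (w y) := funext fun y => hχε y
  set G : En n → En n := gradient w with hGdef
  set V : En n → En n := fun y => (⟪G y, G y⟫ + χε y) • φ y - (2 * ⟪G y, φ y⟫) • G y with hVdef
  -- ContDiffOn pieces
  have hw1 : ContDiffOn ℝ 1 w Ω := hw_smooth.of_le one_le_two
  have hfd1 : ContDiffOn ℝ 1 (fderiv ℝ w) Ω := by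
    have := (contDiffOn_succ_iff_fderiv_of_isOpen (n := 1) hΩ).1 (by exact_mod_cast hw_smooth)
    exact this.2.2
  have hGfun : G = fun y => dualIso n (fderiv ℝ w y) := funext fun y => gradient_eq_dualIso w y
  have hG1 : ContDiffOn ℝ 1 G Ω := by
    rw [hGfun]
    exact ((dualIso n).contDiff).comp_contDiffOn hfd1
  have hχ1 : ContDiffOn ℝ 1 χε Ω := by
    rw [hχeq]
    exact (contDiff_const.mul hB1).comp_contDiffOn hw1
  have hVΩ : ContDiffOn ℝ 1 V Ω := by
    exact (((hG1.inner ℝ hG1).add hχ1).smul (hφ.contDiffOn)).sub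
      ((contDiffOn_const.mul (hG1.inner ℝ hφ.contDiffOn)).smul hG1)
  have hV0 : ∀ y, y ∉ tsupport φ → V y = 0 := by
    intro y hy
    simp [hVdef, image_eq_zero_of_notMem_tsupport hy]
  have hVCD : ContDiff ℝ 1 V := by
    rw [← contDiffOn_univ]
    intro x _
    by_cases hx : x ∈ Ω
    · exact ((hVΩ.contDiffAt (hΩ.mem_nhds hx))).contDiffWithinAt
    · have hx' : x ∈ (tsupport φ)ᶜ := fun h => hx (hφs h)
      refine (contDiffAt_const (c := (0 : En n))).congr_of_eventuallyEq ?_ |>.contDiffWithinAt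
      filter_upwards [(isClosed_tsupport φ).isOpen_compl.mem_nhds hx'] with y hy
      exact hV0 y hy
  have hVcs : HasCompactSupport V := by
    refine IsCompact.of_isClosed_subset hφc isClosed_closure
      (closure_minimal ?_ (isClosed_tsupport φ))
    intro y hy
    by_contra h
    exact hy (hV0 y h)
  -- pointwise identity
  have hpoint : ∀ x, (‖gradient w x‖ ^ 2 * divg φ x
      - 2 * ⟪gradient w x, fderiv ℝ φ x (gradient w x)⟫
      + χε x * divg φ x) = divg V x := by
    intro x
    by_cases hx : x ∈ Ω
    · -- the main computation
      have hmem : Ω ∈ 𝓝 x := hΩ.mem_nhds hx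
      have hx2 : ContDiffAt ℝ 2 w x := hw_smooth.contDiffAt hmem
      have hwd : ∀ᶠ y in 𝓝 x, HasFDerivAt w (fderiv ℝ w y) y := by
        filter_upwards [hmem] with y hy
        exact ((hw_smooth.differentiableOn two_ne_zero).differentiableAt (hΩ.mem_nhds hy)).hasFDerivAt
      have hD1 : ContDiffAt ℝ 1 (fderiv ℝ w) x := hx2.fderiv_right (by norm_num)
      set H := fderiv ℝ (fderiv ℝ w) x with hHdef
      have hHd : HasFDerivAt (fderiv ℝ w) H x := (hD1.differentiableAt one_ne_zero).hasFDerivAt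
      have hsymm : ∀ u v, H u v = H v u := fun u v =>
        second_derivative_symmetric_of_eventually hwd hHd u v
      have hwD : HasFDerivAt w (fderiv ℝ w x) x := (hx2.differentiableAt two_ne_zero).hasFDerivAt
      set 𝒢 : En n →L[ℝ] En n := (dualIso n).comp H with h𝒢
      have hGd : HasFDerivAt G 𝒢 x := by
        rw [hGfun]; exact (dualIso n).hasFDerivAt.comp x hHd
      have hinner𝒢 : ∀ u v, ⟪𝒢 u, v⟫ = H u v := by
        intro u v
        exact dualIso_inner (H u) v
      have h𝒢symm : ∀ u v, ⟪𝒢 u, v⟫ = ⟪𝒢 v, u⟫ := fun u v => by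
        rw [hinner𝒢, hinner𝒢, hsymm]
      have hGinner : ∀ v, ⟪G x, v⟫ = fderiv ℝ w x v := fun v => by
        rw [hGfun]; exact dualIso_inner _ v
      -- trace of 𝒢 is the Laplacian, which equals βe (w x)
      have htrace : ∑ i, 𝒢 (EuclideanSpace.single i 1) i = βe (w x) := by
        have hlap : ∀ i : Fin n, H (EuclideanSpace.single i 1) (EuclideanSpace.single i 1)
            = fderiv ℝ (fun y => fderiv ℝ w y (EuclideanSpace.single i 1)) x
              (EuclideanSpace.single i 1) := by
          intro i
          have hcomp := (ContinuousLinearMap.apply ℝ ℝ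
            (EuclideanSpace.single i 1)).hasFDerivAt.comp x hHd
          simp only [Function.comp_def, ContinuousLinearMap.apply_apply] at hcomp
          rw [hcomp.fderiv]
          rfl
        have h1 : ∑ i, 𝒢 (EuclideanSpace.single i 1) i = lap w x := by
          rw [lap]
          refine Finset.sum_congr rfl fun i _ => ?_
          rw [show (𝒢 (EuclideanSpace.single i 1)) i
            = H (EuclideanSpace.single i 1) (EuclideanSpace.single i 1) from
              dualIso_coord _ i, hlap i]
        rw [h1, hw_eq x hx]
      -- derivative of χε
      have hχd : HasFDerivAt χε ((2 * βe (w x)) • fderiv ℝ w x) x := by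
        rw [hχeq]
        have h1 : HasFDerivAt (fun y => B (w y)) (βe (w x) • fderiv ℝ w x) x :=
          (hBd (w x)).comp_hasFDerivAt x hwD
        have h2 := h1.const_mul 2
        rw [smul_smul] at h2
        exact h2
      have hφd : HasFDerivAt φ (fderiv ℝ φ x) x := (hφ.differentiable one_ne_zero x).hasFDerivAt
      -- derivative of V
      set A' : En n →L[ℝ] ℝ :=
        (fderivInnerCLM ℝ (G x, G x)).comp (𝒢.prod 𝒢) + (2 * βe (w x)) • fderiv ℝ w x with hA'
      have ha' : HasFDerivAt (fun y => ⟪G y, G y⟫ + χε y) A' x := (hGd.inner ℝ hGd).add hχd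
      set B' : En n →L[ℝ] ℝ :=
        2 • ((fderivInnerCLM ℝ (G x, φ x)).comp (𝒢.prod (fderiv ℝ φ x))) with hB'
      have hb' : HasFDerivAt (fun y => 2 * ⟪G y, φ y⟫) B' x := by
        have := (hGd.inner ℝ hφd).const_mul (2:ℝ)
        have e : B' = (2:ℝ) • ((fderivInnerCLM ℝ (G x, φ x)).comp (𝒢.prod (fderiv ℝ φ x))) := by
         rw [hB']
         ext v
         simp only [ContinuousLinearMap.coe_smul', Pi.smul_apply, smul_eq_mul,
          ContinuousLinearMap.comp_apply, ContinuousLinearMap.prod_apply, fderivInnerCLM_apply,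
          PiLp.inner_apply, RCLike.inner_apply, conj_trivial]
         ring
        rw [e]; exact this
      have hVd : HasFDerivAt V
          (((⟪G x, G x⟫ + χε x) • fderiv ℝ φ x + A'.smulRight (φ x))
            - ((2 * ⟪G x, φ x⟫) • 𝒢 + B'.smulRight (G x))) x :=
        (ha'.smul hφd).sub (hb'.smul hGd)
      have hexpand : ∀ i : Fin n, fderiv ℝ V x (EuclideanSpace.single i 1) i
          = (⟪G x, G x⟫ + χε x) * (fderiv ℝ φ x (EuclideanSpace.single i 1) i)
            + (A' (EuclideanSpace.single i 1)) * (φ x i)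
            - ((2 * ⟪G x, φ x⟫) * (𝒢 (EuclideanSpace.single i 1) i)
              + (B' (EuclideanSpace.single i 1)) * (G x i)) := by
        intro i
        rw [hVd.fderiv]
        simp only [ContinuousLinearMap.coe_sub', ContinuousLinearMap.add_apply,
          ContinuousLinearMap.coe_smul', Pi.smul_apply, ContinuousLinearMap.smulRight_apply,
          Pi.sub_apply]
        simp [PiLp.sub_apply, PiLp.add_apply, PiLp.smul_apply, smul_eq_mul]
      have hsum : divg V x
          = (⟪G x, G x⟫ + χε x) * divg φ x + A' (φ x)
            - ((2 * ⟪G x, φ x⟫) * βe (w x) + B' (G x)) := by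
        rw [divg]
        rw [Finset.sum_congr rfl fun i _ => hexpand i]
        rw [Finset.sum_sub_distrib, Finset.sum_add_distrib, Finset.sum_add_distrib,
          ← Finset.mul_sum, ← Finset.mul_sum, clm_sum_mul, clm_sum_mul, htrace, divg]
      rw [hsum]
      -- evaluate A' (φ x) and B' (G x)
      have hAφ : A' (φ x) = 2 * ⟪𝒢 (G x), φ x⟫ + 2 * βe (w x) * ⟪G x, φ x⟫ := by
        rw [hA']
        simp only [ContinuousLinearMap.add_apply, ContinuousLinearMap.comp_apply,
          ContinuousLinearMap.prod_apply, fderivInnerCLM_apply, ContinuousLinearMap.coe_smul',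
          Pi.smul_apply, smul_eq_mul]
        have e1 : ⟪G x, 𝒢 (φ x)⟫ = ⟪𝒢 (G x), φ x⟫ := by
          rw [real_inner_comm]; exact h𝒢symm (φ x) (G x)
        have e2 : ⟪𝒢 (φ x), G x⟫ = ⟪𝒢 (G x), φ x⟫ := h𝒢symm (φ x) (G x)
        have e3 : ⟪G x, φ x⟫ = fderiv ℝ w x (φ x) := hGinner (φ x)
        linear_combination e1 + e2 - 2 * βe (w x) * e3
      have hBG : B' (G x) = 2 * ⟪G x, fderiv ℝ φ x (G x)⟫ + 2 * ⟪𝒢 (G x), φ x⟫ := by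
        rw [hB']
        simp only [ContinuousLinearMap.coe_smul', Pi.smul_apply, ContinuousLinearMap.comp_apply,
          ContinuousLinearMap.prod_apply, fderivInnerCLM_apply, smul_eq_mul]
        ring
      rw [hAφ, hBG, ← real_inner_self_eq_norm_sq]
      ring
    · -- outside Ω: everything vanishes
      have hx' : x ∈ (tsupport φ)ᶜ := fun h => hx (hφs h)
      have hop := (isClosed_tsupport φ).isOpen_compl.mem_nhds hx'
      have hφ0 : fderiv ℝ φ x = 0 := by
        have hev : φ =ᶠ[𝓝 x] (fun _ => 0) := by
          filter_upwards [hop] with y hy using image_eq_zero_of_notMem_tsupport hy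
        rw [hev.fderiv_eq, fderiv_fun_const]; rfl
      have hV0' : fderiv ℝ V x = 0 := by
        have hev : V =ᶠ[𝓝 x] (fun _ => 0) := by
          filter_upwards [hop] with y hy using hV0 y hy
        rw [hev.fderiv_eq, fderiv_fun_const]; rfl
      simp [divg, hφ0, hV0']
  -- conclude
  have hI0 : ∀ x, x ∉ Ω → (‖gradient w x‖ ^ 2 * divg φ x
      - 2 * ⟪gradient w x, fderiv ℝ φ x (gradient w x)⟫
      + χε x * divg φ x) = 0 := by
    intro x hx
    rw [hpoint x]
    have hx' : x ∈ (tsupport φ)ᶜ := fun h => hx (hφs h)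
    have hV0' : fderiv ℝ V x = 0 := by
      have hev : V =ᶠ[𝓝 x] (fun _ => 0) := by
        filter_upwards [(isClosed_tsupport φ).isOpen_compl.mem_nhds hx'] with y hy using hV0 y hy
      rw [hev.fderiv_eq, fderiv_fun_const]; rfl
    simp [divg, hV0']
  rw [setIntegral_eq_integral_of_forall_compl_eq_zero hI0]
  calc ∫ x, (‖gradient w x‖ ^ 2 * divg φ x
      - 2 * ⟪gradient w x, fderiv ℝ φ x (gradient w x)⟫
      + χε x * divg φ x) = ∫ x, divg V x := by
        congr 1; funext x; exact hpoint x
    _ = 0 := divg_integral_zero V hVCD hVcs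
end
end
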